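/- Let A ∈ ℝ^{n×n} be a symmetric matrix all of whose diagonal entries are zero. Then A is almost negative definite if and only if there exist n vectors y¹, …, yⁿ ∈ ℝⁿ such that A_{ij} = |yⁱ − yʲ|² for all 1 ≤ i, j ≤ n, where |·| denotes the Euclidean norm on ℝⁿ. -/

import Mathlib

/-!
If `A i j = ‖y i - y j‖ ^ 2`, then for `∑ i, c i = 0` the terms `‖y i‖ ^ 2` drop out of `cᵀ A c`,
leaving `cᵀ A c = -2 ‖∑ i, c i • y i‖ ^ 2 ≤ 0`.

Conversely, fix an index `i₀` and let `P = 1 - e_{i₀} 𝟙ᵀ`, which maps every vector onto the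
hyperplane `∑ i, x i = 0` and fixes that hyperplane pointwise. Almost negative definiteness makes
`M = -½ PᵀAP` positive semidefinite, so `M` is the Gram matrix of vectors `v i ∈ ℝⁿ`, and
`‖∑ i, c i • v i‖ ^ 2 = cᵀMc = -½ cᵀAc` whenever `∑ i, c i = 0`. With `c = e_i - e_j` and the zero
diagonal this reads `‖v i - v j‖ ^ 2 = A i j`.
-/

/-- A symmetric real matrix `A` is *almost negative definite* if
`yᵀ A y ≤ 0` for every vector `y` whose coordinates sum to zero. -/
def IsAND {n : ℕ} (A : Matrix (Fin n) (Fin n) ℝ) : Prop :=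
  A.IsSymm ∧ ∀ y : Fin n → ℝ, (∑ i, y i) = 0 →
    ∑ i, ∑ j, y i * A i j * y j ≤ 0

open Matrix

open scoped ComplexOrder in
theorem Matrix.PosSemidef.exists_gram_eq {𝕜 ι : Type*} [RCLike 𝕜] [Fintype ι] [DecidableEq ι]
    {M : Matrix ι ι 𝕜} (hM : M.PosSemidef) :
    ∃ v : ι → EuclideanSpace 𝕜 ι, gram 𝕜 v = M := by
  open scoped MatrixOrder in
  obtain ⟨B, rfl⟩ := CStarAlgebra.nonneg_iff_eq_star_mul_self.mp hM.nonneg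
  refine ⟨fun j => WithLp.toLp 2 (fun i => B i j), ?_⟩
  rw [gram_eq_conjTranspose_mul (EuclideanSpace.basisFun ι 𝕜)]
  rfl

theorem sum_sum_mul_norm_sub_sq_mul {E ι : Type*} [NormedAddCommGroup E] [InnerProductSpace ℝ E]
    [Fintype ι] (y : ι → E) {c : ι → ℝ} (hc : ∑ i, c i = 0) :
    ∑ i, ∑ j, c i * ‖y i - y j‖ ^ 2 * c j = -2 * ‖∑ i, c i • y i‖ ^ 2 := by
  have hgram : ∑ i, ∑ j, c i * inner ℝ (y i) (y j) * c j = ‖∑ i, c i • y i‖ ^ 2 := by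
    rw [← real_inner_self_eq_norm_sq, ← star_dotProduct_gram_mulVec, dot_mulVec_eq_sum_sum,
      Finset.sum_comm]
    rfl
  have hleft : ∑ i, ∑ j, c i * ‖y i‖ ^ 2 * c j = 0 := by
    rw [← Finset.sum_mul_sum, hc, mul_zero]
  have hright : ∑ i, ∑ j, c i * ‖y j‖ ^ 2 * c j = 0 := by
    simp only [mul_assoc]
    rw [← Finset.sum_mul_sum, hc, zero_mul]
  have hexpand : ∀ i j, c i * ‖y i - y j‖ ^ 2 * c j = c i * ‖y i‖ ^ 2 * c j
      - 2 * (c i * inner ℝ (y i) (y j) * c j) + c i * ‖y j‖ ^ 2 * c j := fun i j => by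
    rw [norm_sub_sq_real]; ring
  have hcross : ∑ i, ∑ j, 2 * (c i * inner ℝ (y i) (y j) * c j) = 2 * ‖∑ i, c i • y i‖ ^ 2 := by
    simp only [← hgram, Finset.mul_sum]
  simp only [hexpand, Finset.sum_add_distrib, Finset.sum_sub_distrib]
  rw [hleft, hright, hcross]
  ring

section SumZeroProj

variable {R ι : Type*} [CommRing R] [Fintype ι] [DecidableEq ι]

def sumZeroProj (i₀ : ι) : Matrix ι ι R := 1 - vecMulVec (Pi.single i₀ 1) 1

theorem sumZeroProj_mulVec (i₀ : ι) (x : ι → R) :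
    sumZeroProj i₀ *ᵥ x = x - (∑ i, x i) • Pi.single i₀ 1 := by
  rw [sumZeroProj, sub_mulVec, one_mulVec, vecMulVec_mulVec, one_dotProduct, op_smul_eq_smul]

theorem sum_sumZeroProj_mulVec (i₀ : ι) (x : ι → R) : ∑ i, (sumZeroProj i₀ *ᵥ x) i = 0 := by
  simp [sumZeroProj_mulVec, Finset.sum_sub_distrib, Pi.single_apply]

theorem sumZeroProj_mulVec_of_sum_eq_zero (i₀ : ι) {x : ι → R} (hx : ∑ i, x i = 0) :
    sumZeroProj i₀ *ᵥ x = x := by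
  simp [sumZeroProj_mulVec, hx]

end SumZeroProj

theorem dotProduct_conjTranspose_mul_mul_mulVec {ι : Type*} [Fintype ι] (A B : Matrix ι ι ℝ)
    (x : ι → ℝ) :
    x ⬝ᵥ (Bᴴ * A * B) *ᵥ x = (B *ᵥ x) ⬝ᵥ A *ᵥ (B *ᵥ x) := by
  rw [← mulVec_mulVec, ← mulVec_mulVec, dotProduct_mulVec, vecMul_conjTranspose]
  simp only [star_trivial]

variable {ι : Type*} [Fintype ι] [DecidableEq ι]

theorem exists_norm_sq_sum_smul_eq {A : Matrix ι ι ℝ} (hA : A.IsSymm)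
    (hneg : ∀ c : ι → ℝ, ∑ i, c i = 0 → c ⬝ᵥ A *ᵥ c ≤ 0) :
    ∃ v : ι → EuclideanSpace ℝ ι, ∀ c : ι → ℝ, ∑ i, c i = 0 →
      ‖∑ i, c i • v i‖ ^ 2 = -(c ⬝ᵥ A *ᵥ c) / 2 := by
  rcases isEmpty_or_nonempty ι with hι | ⟨⟨i₀⟩⟩
  · exact ⟨isEmptyElim, fun c _ => by simp [dotProduct]⟩
  set P : Matrix ι ι ℝ := sumZeroProj i₀
  have hM : (-(1 / 2 : ℝ) • (Pᴴ * A * P)).PosSemidef := by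
    refine .of_dotProduct_mulVec_nonneg ?_ fun x => ?_
    · exact (isHermitian_conjTranspose_mul_mul P hA).smul (.all _)
    · rw [star_trivial, smul_mulVec, dotProduct_smul, dotProduct_conjTranspose_mul_mul_mulVec]
      have := hneg _ (sum_sumZeroProj_mulVec i₀ x)
      simp only [smul_eq_mul]
      linarith
  obtain ⟨v, hv⟩ := hM.exists_gram_eq
  refine ⟨v, fun c hc => ?_⟩
  rw [← real_inner_self_eq_norm_sq, ← star_dotProduct_gram_mulVec, hv, star_trivial, smul_mulVec,
    dotProduct_smul, dotProduct_conjTranspose_mul_mul_mulVec,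
    sumZeroProj_mulVec_of_sum_eq_zero i₀ hc, smul_eq_mul]
  ring

theorem isSymm_and_nonpos_iff_exists_norm_sub_sq {A : Matrix ι ι ℝ} (hdiag : ∀ i, A i i = 0) :
    (A.IsSymm ∧ ∀ c : ι → ℝ, ∑ i, c i = 0 → c ⬝ᵥ A *ᵥ c ≤ 0) ↔
      ∃ y : ι → EuclideanSpace ℝ ι, ∀ i j, A i j = ‖y i - y j‖ ^ 2 := by
  constructor
  · rintro ⟨hA, hneg⟩
    obtain ⟨v, hv⟩ := exists_norm_sq_sum_smul_eq hA hneg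
    refine ⟨v, fun i j => ?_⟩
    have h := hv (Pi.single i 1 - Pi.single j 1) (by simp)
    simp only [Pi.sub_apply, sub_smul, Finset.sum_sub_distrib, Fintype.sum_single_smul, one_smul,
      mulVec_sub, mulVec_single, MulOpposite.op_one, dotProduct_sub, sub_dotProduct,
      single_dotProduct, col_apply, one_mul, neg_sub] at h
    rw [h, hdiag, hdiag, hA.apply i j]
    ring
  · rintro ⟨y, hy⟩
    refine ⟨IsSymm.ext fun i j => by rw [hy, hy, norm_sub_rev], fun c hc => ?_⟩
    rw [dot_mulVec_eq_sum_sum, Finset.sum_comm]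
    simp_rw [hy]
    rw [sum_sum_mul_norm_sub_sq_mul y hc]
    linarith [sq_nonneg ‖∑ i, c i • y i‖]

theorem isAND_iff {n : ℕ} (A : Matrix (Fin n) (Fin n) ℝ) :
    IsAND A ↔ A.IsSymm ∧ ∀ c : Fin n → ℝ, ∑ i, c i = 0 → c ⬝ᵥ A *ᵥ c ≤ 0 := by
  refine and_congr_right fun _ => forall₂_congr fun c _ => ?_
  rw [dot_mulVec_eq_sum_sum, Finset.sum_comm]

theorem stmt1 {n : ℕ} (A : Matrix (Fin n) (Fin n) ℝ)
    (hdiag : ∀ i, A i i = 0) :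
    IsAND A ↔
      ∃ y : Fin n → EuclideanSpace ℝ (Fin n),
        ∀ i j, A i j = ‖y i - y j‖ ^ 2 := by
  rw [isAND_iff, isSymm_and_nonpos_iff_exists_norm_sub_sq hdiag]
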